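/- For all real x with 0 < x < π/2, 2 + (8/45 − (8/945)x^2 + (16/14175)x^4)·x^3·tan x < (sin x/x)^2 + (tan x)/x < 2 + (8/45 − (8/945)x^2 + b·x^4)·x^3·tan x, where b = (241920 − 2688π^4 + 32π^6)/(945π^8). -/

import Mathlib

/-!
Multiplying by `x ^ 2 * cos x > 0` turns the two inequalities into sign conditions on
`wilkerGap a x = cos x * (2x² - sin² x) + sin x * (a x⁹ + 8/45 x⁵ - 8/945 x⁷ - x)`:
it must be negative for `a = 16/14175` and positive for `a = b` on `(0, π/2)`.

On `[0, ∞)`, `sin` and `cos` lie between consecutive Taylor polynomials (integrate `1 - cos ≥ 0`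
repeatedly). Replacing them by Taylor polynomials of degree at most 12 bounds `wilkerGap a` by an
explicit polynomial whose low-order terms cancel, and whose sign on the relevant interval is then
a matter of polynomial arithmetic. This gives the lower bound on all of `(0, π/2)` and the upper
bound on `(0, 1.46]`. Near `π/2` these bounds are too weak for the upper bound; there the same
method shows that the derivative of `wilkerGap b` is negative on `[1.46, π/2]`, and `b` is exactly
the value of `a` for which `wilkerGap a (π/2) = 0`, which is also why it is best possible.
-/

open Real Set Finset
open scoped Nat

noncomputable def sinTaylor (n : ℕ) (x : ℝ) : ℝ :=
  ∑ k ∈ range n, (-1) ^ k * x ^ (2 * k + 1) / (2 * k + 1)!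

noncomputable def cosTaylor (n : ℕ) (x : ℝ) : ℝ :=
  ∑ k ∈ range n, (-1) ^ k * x ^ (2 * k) / (2 * k)!

lemma hasDerivAt_sinTaylor (n : ℕ) (x : ℝ) : HasDerivAt (sinTaylor n) (cosTaylor n x) x := by
  refine HasDerivAt.fun_sum fun k _ ↦ ?_
  refine (((hasDerivAt_pow (2 * k + 1) x).const_mul ((-1 : ℝ) ^ k)).div_const
    ((2 * k + 1)! : ℝ)).congr_deriv ?_
  rw [Nat.factorial_succ]
  push_cast
  field_simp

lemma hasDerivAt_cosTaylor_succ (n : ℕ) (x : ℝ) :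
    HasDerivAt (cosTaylor (n + 1)) (-sinTaylor n x) x := by
  have hsplit : cosTaylor (n + 1) =
      fun y ↦ ∑ k ∈ range n, (-1 : ℝ) ^ (k + 1) * y ^ (2 * (k + 1)) / (2 * (k + 1))! + 1 := by
    ext y
    simp [cosTaylor, sum_range_succ']
  rw [hsplit, sinTaylor, ← sum_neg_distrib]
  refine (HasDerivAt.fun_sum fun k _ ↦ ?_).add_const 1
  refine (((hasDerivAt_pow (2 * (k + 1)) x).const_mul ((-1 : ℝ) ^ (k + 1))).div_const
    ((2 * (k + 1))! : ℝ)).congr_deriv ?_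
  rw [show 2 * (k + 1) = 2 * k + 1 + 1 by ring, Nat.factorial_succ]
  push_cast
  field_simp
  ring

lemma nonneg_of_hasDerivAt_nonneg {f f' : ℝ → ℝ} (hf : ∀ t, HasDerivAt f (f' t) t)
    (hf' : ∀ t, 0 ≤ t → 0 ≤ f' t) (h0 : f 0 = 0) {x : ℝ} (hx : 0 ≤ x) : 0 ≤ f x := by
  have hmono : MonotoneOn f (Ici 0) :=
    monotoneOn_of_hasDerivWithinAt_nonneg (convex_Ici 0)
      (fun t _ ↦ (hf t).continuousAt.continuousWithinAt)
      (fun t _ ↦ (hf t).hasDerivWithinAt) fun t ht ↦ hf' t (interior_subset ht)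
  simpa [h0] using hmono self_mem_Ici hx hx

lemma neg_one_pow_mul_sin_sub_sinTaylor_nonneg_of_cos {n : ℕ}
    (hcos : ∀ t, 0 ≤ t → 0 ≤ (-1) ^ n * (cos t - cosTaylor n t)) {x : ℝ} (hx : 0 ≤ x) :
    0 ≤ (-1) ^ n * (sin x - sinTaylor n x) :=
  nonneg_of_hasDerivAt_nonneg
    (fun t ↦ ((hasDerivAt_sin t).sub (hasDerivAt_sinTaylor n t)).const_mul _)
    hcos (by simp [sinTaylor]) hx

lemma neg_one_pow_succ_mul_cos_sub_cosTaylor_nonneg_of_sin {n : ℕ}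
    (hsin : ∀ t, 0 ≤ t → 0 ≤ (-1) ^ n * (sin t - sinTaylor n t)) {x : ℝ} (hx : 0 ≤ x) :
    0 ≤ (-1) ^ (n + 1) * (cos x - cosTaylor (n + 1) x) :=
  nonneg_of_hasDerivAt_nonneg
    (fun t ↦ ((hasDerivAt_cos t).sub (hasDerivAt_cosTaylor_succ n t)).const_mul _)
    (fun t ht ↦ by convert hsin t ht using 1; ring)
    (by simp [cosTaylor, sum_range_succ']) hx

lemma neg_one_pow_succ_mul_cos_sub_cosTaylor_nonneg (n : ℕ) {x : ℝ} (hx : 0 ≤ x) :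
    0 ≤ (-1) ^ (n + 1) * (cos x - cosTaylor (n + 1) x) := by
  induction n generalizing x with
  | zero => simpa [cosTaylor] using cos_le_one x
  | succ n ih =>
    exact neg_one_pow_succ_mul_cos_sub_cosTaylor_nonneg_of_sin
      (fun _ ↦ neg_one_pow_mul_sin_sub_sinTaylor_nonneg_of_cos fun _ ↦ ih) hx

lemma cos_le_cosTaylor (m : ℕ) {x : ℝ} (hx : 0 ≤ x) : cos x ≤ cosTaylor (2 * m + 1) x := by
  have h := neg_one_pow_succ_mul_cos_sub_cosTaylor_nonneg (2 * m) hx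
  rw [Odd.neg_one_pow (by simp)] at h
  linarith

lemma cosTaylor_le_cos (m : ℕ) {x : ℝ} (hx : 0 ≤ x) : cosTaylor (2 * m + 2) x ≤ cos x := by
  have h := neg_one_pow_succ_mul_cos_sub_cosTaylor_nonneg (2 * m + 1) hx
  rw [Even.neg_one_pow (by simp [parity_simps])] at h
  linarith

lemma sin_le_sinTaylor (m : ℕ) {x : ℝ} (hx : 0 ≤ x) : sin x ≤ sinTaylor (2 * m + 1) x := by
  have h := neg_one_pow_mul_sin_sub_sinTaylor_nonneg_of_cos
    (fun _ ↦ neg_one_pow_succ_mul_cos_sub_cosTaylor_nonneg (2 * m)) hx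
  rw [Odd.neg_one_pow (by simp)] at h
  linarith

lemma sinTaylor_le_sin (m : ℕ) {x : ℝ} (hx : 0 ≤ x) : sinTaylor (2 * m + 2) x ≤ sin x := by
  have h := neg_one_pow_mul_sin_sub_sinTaylor_nonneg_of_cos
    (fun _ ↦ neg_one_pow_succ_mul_cos_sub_cosTaylor_nonneg (2 * m + 1)) hx
  rw [Even.neg_one_pow (by simp [parity_simps])] at h
  linarith

noncomputable def wilkerGap (a x : ℝ) : ℝ :=
  cos x * (2 * x ^ 2 - sin x ^ 2) + sin x * (a * x ^ 9 + 8 / 45 * x ^ 5 - 8 / 945 * x ^ 7 - x)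

noncomputable def wilkerGapDeriv (a x : ℝ) : ℝ :=
  -sin x * (2 * x ^ 2 - sin x ^ 2) + cos x * (4 * x - 2 * sin x * cos x)
    + cos x * (a * x ^ 9 + 8 / 45 * x ^ 5 - 8 / 945 * x ^ 7 - x)
    + sin x * (9 * a * x ^ 8 + 8 / 9 * x ^ 4 - 8 / 135 * x ^ 6 - 1)

lemma hasDerivAt_wilkerGap (a x : ℝ) : HasDerivAt (wilkerGap a) (wilkerGapDeriv a x) x := by
  have h₁ : HasDerivAt (fun y ↦ 2 * y ^ 2 - sin y ^ 2) (4 * x - 2 * sin x * cos x) x := by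
    refine (((hasDerivAt_pow 2 x).const_mul 2).sub ((hasDerivAt_sin x).pow 2)).congr_deriv ?_
    push_cast
    ring
  have h₂ : HasDerivAt (fun y ↦ a * y ^ 9 + 8 / 45 * y ^ 5 - 8 / 945 * y ^ 7 - y)
      (9 * a * x ^ 8 + 8 / 9 * x ^ 4 - 8 / 135 * x ^ 6 - 1) x := by
    refine (((((hasDerivAt_pow 9 x).const_mul a).add ((hasDerivAt_pow 5 x).const_mul (8 / 45))).sub
      ((hasDerivAt_pow 7 x).const_mul (8 / 945))).sub (hasDerivAt_id x)).congr_deriv ?_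
    push_cast
    ring
  exact (((hasDerivAt_cos x).mul h₁).add ((hasDerivAt_sin x).mul h₂)).congr_deriv
    (by unfold wilkerGapDeriv; ring)

lemma wilker_sub_eq_wilkerGap_div (a : ℝ) {x : ℝ} (hx : x ≠ 0) (hc : cos x ≠ 0) :
    2 + (8 / 45 - 8 / 945 * x ^ 2 + a * x ^ 4) * x ^ 3 * tan x - ((sin x / x) ^ 2 + tan x / x)
      = wilkerGap a x / (x ^ 2 * cos x) := by
  rw [tan_eq_sin_div_cos, wilkerGap]
  field_simp
  ring

lemma wilkerGap_mono {a b x : ℝ} (hab : a ≤ b) (hx : 0 ≤ x) (hs : 0 ≤ sin x) :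
    wilkerGap a x ≤ wilkerGap b x := by
  have : a * x ^ 9 * sin x ≤ b * x ^ 9 * sin x := by gcongr
  unfold wilkerGap
  linarith

lemma wilkerGapDeriv_mono {a b x : ℝ} (hab : a ≤ b) (hx : 0 ≤ x) (hs : 0 ≤ sin x)
    (hc : 0 ≤ cos x) : wilkerGapDeriv a x ≤ wilkerGapDeriv b x := by
  have h₁ : a * x ^ 9 * cos x ≤ b * x ^ 9 * cos x := by gcongr
  have h₂ : a * x ^ 8 * sin x ≤ b * x ^ 8 * sin x := by gcongr
  unfold wilkerGapDeriv
  linarith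

lemma taylor_le_neg_wilkerGap {a x : ℝ} (hx : 0 ≤ x) (hxπ : x ≤ π / 2)
    (hp : 0 ≤ 8 / 45 * x ^ 5 - 8 / 945 * x ^ 7 + a * x ^ 9) :
    cosTaylor 6 x - cosTaylor 7 x ^ 3 + x * sinTaylor 6 x - 2 * x ^ 2 * cosTaylor 7 x
      - (8 / 45 * x ^ 5 - 8 / 945 * x ^ 7 + a * x ^ 9) * sinTaylor 5 x ≤ -wilkerGap a x := by
  have hc : 0 ≤ cos x := cos_nonneg_of_neg_pi_div_two_le_of_le (by linarith [pi_pos]) hxπ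
  have hcos_lo : cosTaylor 6 x ≤ cos x := cosTaylor_le_cos 2 hx
  have hcos_hi : cos x ≤ cosTaylor 7 x := cos_le_cosTaylor 3 hx
  have hsin_lo : sinTaylor 6 x ≤ sin x := sinTaylor_le_sin 2 hx
  have hsin_hi : sin x ≤ sinTaylor 5 x := sin_le_sinTaylor 2 hx
  have hsq : sin x ^ 2 * cos x = cos x - cos x ^ 3 := by rw [sin_sq]; ring
  have h₁ : cos x ^ 3 ≤ cosTaylor 7 x ^ 3 := by gcongr
  have h₂ : x ^ 2 * cos x ≤ x ^ 2 * cosTaylor 7 x := by gcongr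
  have h₃ : x * sinTaylor 6 x ≤ x * sin x := by gcongr
  have h₄ : (8 / 45 * x ^ 5 - 8 / 945 * x ^ 7 + a * x ^ 9) * sin x
      ≤ (8 / 45 * x ^ 5 - 8 / 945 * x ^ 7 + a * x ^ 9) * sinTaylor 5 x := by gcongr
  unfold wilkerGap
  linarith

lemma taylor_minorant_neg_wilkerGap_pos {x : ℝ} (hx : 0 < x) (hx' : x ≤ 15707965 / 10 ^ 7) :
    0 < cosTaylor 6 x - cosTaylor 7 x ^ 3 + x * sinTaylor 6 x - 2 * x ^ 2 * cosTaylor 7 x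
      - (8 / 45 * x ^ 5 - 8 / 945 * x ^ 7 + 16 / 14175 * x ^ 9) * sinTaylor 5 x := by
  convert_to 0 < x ^ 12 * (8191 / 479001600 + 13429 / 6286896000 * x ^ 2
      - 644657 / 2414168064000 * (x ^ 2) ^ 2 + 34781 / 2897001676800 * (x ^ 2) ^ 3
      - 703 / 1970749440000 * (x ^ 2) ^ 4 + 3977 / 579400335360000 * (x ^ 2) ^ 5
      - 116141 / 1070731819745280000 * (x ^ 2) ^ 6 + 5021 / 3569106065817600000 * (x ^ 2) ^ 7
      - 1907 / 128487818369433600000 * (x ^ 2) ^ 8 + 103 / 825993118089216000000 * (x ^ 2) ^ 9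
      - 37 / 46255614612996096000000 * (x ^ 2) ^ 10
      + 1 / 277533687677976576000000 * (x ^ 2) ^ 11
      - 1 / 109903340320478724096000000 * (x ^ 2) ^ 12) using 1
  · simp [cosTaylor, sinTaylor, sum_range_succ, Nat.factorial]
    ring
  refine mul_pos (by positivity) ?_
  have h0 : 0 ≤ x ^ 2 := sq_nonneg x
  have h1 : x ^ 2 ≤ 2467402 / 1000000 := by nlinarith
  generalize x ^ 2 = y at h0 h1
  nlinarith [pow_le_pow_left₀ h0 h1 2, pow_le_pow_left₀ h0 h1 4, pow_le_pow_left₀ h0 h1 6,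
    pow_le_pow_left₀ h0 h1 8, pow_le_pow_left₀ h0 h1 10, pow_le_pow_left₀ h0 h1 12,
    pow_nonneg h0 1, pow_nonneg h0 3, pow_nonneg h0 5, pow_nonneg h0 7, pow_nonneg h0 9,
    pow_nonneg h0 11]

lemma wilkerGap_neg {x : ℝ} (hx : 0 < x) (hxπ : x < π / 2) : wilkerGap (16 / 14175) x < 0 := by
  have hp : 0 ≤ 8 / 45 * x ^ 5 - 8 / 945 * x ^ 7 + 16 / 14175 * x ^ 9 := by
    nlinarith [mul_nonneg (pow_nonneg hx.le 5) (sq_nonneg (x ^ 2 - 15 / 4)), pow_nonneg hx.le 5]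
  have hx' : x ≤ 15707965 / 10 ^ 7 := by linarith [pi_lt_d6]
  linarith [taylor_le_neg_wilkerGap hx.le hxπ.le hp, taylor_minorant_neg_wilkerGap_pos hx hx']

lemma taylor_le_wilkerGap {a x : ℝ} (ha : 0 ≤ a) (hx : 0 ≤ x) (hxπ : x ≤ π / 2) :
    2 * x ^ 2 * cosTaylor 6 x + sinTaylor 4 x * (a * x ^ 9 + 8 / 45 * x ^ 5)
      - sinTaylor 5 x * (8 / 945 * x ^ 7 + x) - cosTaylor 7 x + cosTaylor 6 x ^ 3
      ≤ wilkerGap a x := by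
  have hs : 0 ≤ sin x := sin_nonneg_of_nonneg_of_le_pi hx (by linarith [pi_pos])
  have hcos_lo : cosTaylor 6 x ≤ cos x := cosTaylor_le_cos 2 hx
  have hcos_hi : cos x ≤ cosTaylor 7 x := cos_le_cosTaylor 3 hx
  have hsin_lo : sinTaylor 4 x ≤ sin x := sinTaylor_le_sin 1 hx
  have hsin_hi : sin x ≤ sinTaylor 5 x := sin_le_sinTaylor 2 hx
  have hsq : sin x ^ 2 * cos x = cos x - cos x ^ 3 := by rw [sin_sq]; ring
  have h₁ : cosTaylor 6 x ^ 3 ≤ cos x ^ 3 := (Odd.strictMono_pow (by decide)).monotone hcos_lo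
  have h₂ : x ^ 2 * cosTaylor 6 x ≤ x ^ 2 * cos x := by gcongr
  have h₃ : sinTaylor 4 x * (a * x ^ 9 + 8 / 45 * x ^ 5)
      ≤ sin x * (a * x ^ 9 + 8 / 45 * x ^ 5) := by gcongr
  have h₄ : sin x * (8 / 945 * x ^ 7 + x) ≤ sinTaylor 5 x * (8 / 945 * x ^ 7 + x) := by gcongr
  unfold wilkerGap
  linarith

lemma taylor_minorant_wilkerGap_pos {x : ℝ} (hx : 0 < x) (hx' : x ≤ 73 / 50) :
    0 < 2 * x ^ 2 * cosTaylor 6 x + sinTaylor 4 x * (12098719 / 10 ^ 10 * x ^ 9 + 8 / 45 * x ^ 5)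
      - sinTaylor 5 x * (8 / 945 * x ^ 7 + x) - cosTaylor 7 x + cosTaylor 6 x ^ 3 := by
  convert_to 0 < x ^ 10 * (459973673 / 5670000000000 - 11471429153 / 374220000000000 * x ^ 2
      - 9277059289 / 4762800000000000 * (x ^ 2) ^ 2 + 2666718857 / 10716300000000000 * (x ^ 2) ^ 3
      - 2171 / 146313216000 * (x ^ 2) ^ 4 + 2957 / 8778792960000 * (x ^ 2) ^ 5
      - 1 / 167215104000 * (x ^ 2) ^ 6 + 241 / 2949674434560000 * (x ^ 2) ^ 7
      - 73 / 88490233036800000 * (x ^ 2) ^ 8 + 1 / 176980466073600000 * (x ^ 2) ^ 9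
      - 1 / 47784725839872000000 * (x ^ 2) ^ 10) using 1
  · simp [cosTaylor, sinTaylor, sum_range_succ, Nat.factorial]
    ring
  refine mul_pos (by positivity) ?_
  have h0 : 0 ≤ x ^ 2 := sq_nonneg x
  have h1 : x ^ 2 ≤ 5329 / 2500 := by nlinarith
  generalize x ^ 2 = y at h0 h1
  nlinarith [pow_le_pow_left₀ h0 h1 1, pow_le_pow_left₀ h0 h1 2, pow_le_pow_left₀ h0 h1 4,
    pow_le_pow_left₀ h0 h1 6, pow_le_pow_left₀ h0 h1 8, pow_le_pow_left₀ h0 h1 10,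
    pow_nonneg h0 3, pow_nonneg h0 5, pow_nonneg h0 7, pow_nonneg h0 9]

lemma wilkerGap_pos_of_le {a x : ℝ} (ha : 12098719 / 10 ^ 10 ≤ a) (hx : 0 < x)
    (hx' : x ≤ 73 / 50) : 0 < wilkerGap a x := by
  have hxπ : x ≤ π / 2 := by linarith [pi_gt_three]
  calc 0 < _ := taylor_minorant_wilkerGap_pos hx hx'
    _ ≤ wilkerGap (12098719 / 10 ^ 10) x := taylor_le_wilkerGap (by norm_num) hx.le hxπ
    _ ≤ wilkerGap a x :=
      wilkerGap_mono ha hx.le (sin_nonneg_of_nonneg_of_le_pi hx.le (by linarith [pi_pos]))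

lemma wilkerGapDeriv_le_taylor {a x : ℝ} (ha : 0 ≤ a) (hx : 0 ≤ x) (hxπ : x ≤ π / 2) :
    wilkerGapDeriv a x ≤ -2 * x ^ 2 * sinTaylor 6 x + 3 * sinTaylor 5 x ^ 3 - 2 * sinTaylor 6 x
      + 4 * x * cosTaylor 7 x + cosTaylor 7 x * (a * x ^ 9 + 8 / 45 * x ^ 5)
      - cosTaylor 6 x * (8 / 945 * x ^ 7 + x) + sinTaylor 5 x * (9 * a * x ^ 8 + 8 / 9 * x ^ 4)
      - sinTaylor 6 x * (8 / 135 * x ^ 6 + 1) := by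
  have hs : 0 ≤ sin x := sin_nonneg_of_nonneg_of_le_pi hx (by linarith [pi_pos])
  have hc : 0 ≤ cos x := cos_nonneg_of_neg_pi_div_two_le_of_le (by linarith [pi_pos]) hxπ
  have hcos_lo : cosTaylor 6 x ≤ cos x := cosTaylor_le_cos 2 hx
  have hcos_hi : cos x ≤ cosTaylor 7 x := cos_le_cosTaylor 3 hx
  have hsin_lo : sinTaylor 6 x ≤ sin x := sinTaylor_le_sin 2 hx
  have hsin_hi : sin x ≤ sinTaylor 5 x := sin_le_sinTaylor 2 hx
  have hsq : sin x * cos x ^ 2 = sin x - sin x ^ 3 := by rw [cos_sq']; ring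
  have h₁ : sin x ^ 3 ≤ sinTaylor 5 x ^ 3 := by gcongr
  have h₂ : x ^ 2 * sinTaylor 6 x ≤ x ^ 2 * sin x := by gcongr
  have h₃ : x * cos x ≤ x * cosTaylor 7 x := by gcongr
  have h₄ : cos x * (a * x ^ 9 + 8 / 45 * x ^ 5)
      ≤ cosTaylor 7 x * (a * x ^ 9 + 8 / 45 * x ^ 5) := by gcongr
  have h₅ : cosTaylor 6 x * (8 / 945 * x ^ 7 + x) ≤ cos x * (8 / 945 * x ^ 7 + x) := by gcongr
  have h₆ : sin x * (9 * a * x ^ 8 + 8 / 9 * x ^ 4)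
      ≤ sinTaylor 5 x * (9 * a * x ^ 8 + 8 / 9 * x ^ 4) := by gcongr
  have h₇ : sinTaylor 6 x * (8 / 135 * x ^ 6 + 1) ≤ sin x * (8 / 135 * x ^ 6 + 1) := by gcongr
  unfold wilkerGapDeriv
  linarith

lemma taylor_majorant_wilkerGapDeriv_neg {x : ℝ} (hx : 73 / 50 ≤ x) (hx' : x ≤ 1571 / 1000) :
    -2 * x ^ 2 * sinTaylor 6 x + 3 * sinTaylor 5 x ^ 3 - 2 * sinTaylor 6 x
      + 4 * x * cosTaylor 7 x + cosTaylor 7 x * (12099400 / 10 ^ 10 * x ^ 9 + 8 / 45 * x ^ 5)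
      - cosTaylor 6 x * (8 / 945 * x ^ 7 + x)
      + sinTaylor 5 x * (9 * (12099400 / 10 ^ 10) * x ^ 8 + 8 / 9 * x ^ 4)
      - sinTaylor 6 x * (8 / 135 * x ^ 6 + 1) < 0 := by
  convert_to 2301799 / 2835000000 * x ^ 9 - 57319789 / 155925000000 * x ^ 11
      - 1134253181 / 56133000000000 * x ^ 13 + 416831537 / 107163000000000 * x ^ 15
      - 3726665633 / 18860688000000000 * x ^ 17 + 69157439 / 11430720000000000 * x ^ 19
      - 1207383323 / 10561985280000000000 * x ^ 21 + 19 / 12290310144000 * x ^ 23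
      - 1 / 73741860864000 * x ^ 25 + 1 / 15928241946624000 * x ^ 27 < 0 using 1
  · simp [cosTaylor, sinTaylor, sum_range_succ, Nat.factorial]
    ring
  obtain ⟨t, rfl⟩ : ∃ t, x = 73 / 50 + t := ⟨x - 73 / 50, by ring⟩
  have h0 : 0 ≤ t := by linarith
  have h1 : t ≤ 111 / 1000 := by linarith
  nlinarith [pow_le_pow_left₀ h0 h1 9, pow_le_pow_left₀ h0 h1 10, pow_le_pow_left₀ h0 h1 11,
    pow_le_pow_left₀ h0 h1 12, pow_le_pow_left₀ h0 h1 15, pow_le_pow_left₀ h0 h1 16,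
    pow_le_pow_left₀ h0 h1 17, pow_le_pow_left₀ h0 h1 20, pow_le_pow_left₀ h0 h1 21,
    pow_le_pow_left₀ h0 h1 24, pow_le_pow_left₀ h0 h1 25, pow_le_pow_left₀ h0 h1 26,
    pow_le_pow_left₀ h0 h1 27, pow_nonneg h0 1, pow_nonneg h0 2, pow_nonneg h0 3,
    pow_nonneg h0 4, pow_nonneg h0 5, pow_nonneg h0 6, pow_nonneg h0 7, pow_nonneg h0 8,
    pow_nonneg h0 13, pow_nonneg h0 14, pow_nonneg h0 18, pow_nonneg h0 19, pow_nonneg h0 22,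
    pow_nonneg h0 23]

lemma wilkerGapDeriv_neg {a x : ℝ} (ha : a ≤ 12099400 / 10 ^ 10) (hx : 73 / 50 ≤ x)
    (hxπ : x ≤ π / 2) : wilkerGapDeriv a x < 0 := by
  have hx₀ : 0 ≤ x := by linarith
  calc wilkerGapDeriv a x ≤ wilkerGapDeriv (12099400 / 10 ^ 10) x :=
        wilkerGapDeriv_mono ha hx₀ (sin_nonneg_of_nonneg_of_le_pi hx₀ (by linarith [pi_pos]))
          (cos_nonneg_of_neg_pi_div_two_le_of_le (by linarith [pi_pos]) hxπ)
    _ ≤ _ := wilkerGapDeriv_le_taylor (by norm_num) hx₀ hxπ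
    _ < 0 := taylor_majorant_wilkerGapDeriv_neg hx (by linarith [pi_lt_d6])

noncomputable def wilkerConst : ℝ := (241920 - 2688 * π ^ 4 + 32 * π ^ 6) / (945 * π ^ 8)

lemma wilkerGap_wilkerConst_pi_div_two : wilkerGap wilkerConst (π / 2) = 0 := by
  rw [wilkerGap, wilkerConst, cos_pi_div_two, sin_pi_div_two]
  field_simp
  ring

lemma wilkerConst_bounds :
    12098719 / 10 ^ 10 ≤ wilkerConst ∧ wilkerConst ≤ 12099400 / 10 ^ 10 := by
  have hl : 986960029 / 10 ^ 8 < π ^ 2 := by nlinarith [pi_gt_d6]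
  have hu : π ^ 2 < 493480329 / (5 * 10 ^ 7) := by nlinarith [pi_lt_d6, pi_pos]
  rw [wilkerConst, show π ^ 4 = (π ^ 2) ^ 2 by ring, show π ^ 6 = (π ^ 2) ^ 3 by ring,
    show π ^ 8 = (π ^ 2) ^ 4 by ring]
  generalize π ^ 2 = q at hl hu
  have hq : 0 < q := by linarith
  constructor
  · rw [le_div_iff₀ (by positivity)]
    nlinarith [mul_pos hq hq, pow_pos hq 3]
  · rw [div_le_iff₀ (by positivity)]
    nlinarith [mul_pos hq hq, pow_pos hq 3]

lemma wilkerGap_wilkerConst_pos {x : ℝ} (hx : 0 < x) (hxπ : x < π / 2) :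
    0 < wilkerGap wilkerConst x := by
  obtain ⟨hlo, hup⟩ := wilkerConst_bounds
  rcases le_or_gt x (73 / 50) with hx' | hx'
  · exact wilkerGap_pos_of_le hlo hx hx'
  have hanti : StrictAntiOn (wilkerGap wilkerConst) (Icc (73 / 50) (π / 2)) :=
    strictAntiOn_of_hasDerivWithinAt_neg (convex_Icc _ _)
      (fun t _ ↦ (hasDerivAt_wilkerGap _ t).continuousAt.continuousWithinAt)
      (fun t _ ↦ (hasDerivAt_wilkerGap _ t).hasDerivWithinAt)
      fun t ht ↦ by
        rw [interior_Icc] at ht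
        exact wilkerGapDeriv_neg hup ht.1.le ht.2.le
  have := hanti ⟨hx'.le, hxπ.le⟩ ⟨by linarith [pi_gt_three], le_rfl⟩ hxπ
  rwa [wilkerGap_wilkerConst_pi_div_two] at this

theorem stmt_15 (x : ℝ) (h1 : 0 < x) (h2 : x < π / 2) :
    2 + (8 / 45 - (8 / 945) * x ^ 2 + (16 / 14175) * x ^ 4) * x ^ 3 * tan x <
      (sin x / x) ^ 2 + tan x / x ∧
    (sin x / x) ^ 2 + tan x / x <
      2 + (8 / 45 - (8 / 945) * x ^ 2 +
        ((241920 - 2688 * π ^ 4 + 32 * π ^ 6) / (945 * π ^ 8)) * x ^ 4) * x ^ 3 * tan x := by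
  have hc : 0 < cos x := cos_pos_of_mem_Ioo ⟨by linarith [pi_pos], h2⟩
  have hden : 0 < x ^ 2 * cos x := by positivity
  constructor
  · rw [← sub_neg, wilker_sub_eq_wilkerGap_div _ h1.ne' hc.ne']
    exact div_neg_of_neg_of_pos (wilkerGap_neg h1 h2) hden
  · rw [← sub_pos, wilker_sub_eq_wilkerGap_div _ h1.ne' hc.ne']
    exact div_pos (wilkerGap_wilkerConst_pos h1 h2) hden
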